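/- Let G₁, G₂ be groups each equipped with an invariant σ-algebra, and μ₁, μ₂ probability measures on them with μ₁({e_{G₁}}) > 0. If h is a bounded (μ₁ × μ₂)-harmonic function on G₁ × G₂, then for every g₁ ∈ G₁ the function γ ↦ h(g₁, γ) on G₂ is μ₂-harmonic. -/

import Mathlib

/-! Write `S = avgSnd μ₂` for averaging over the second coordinate and `ε = μ₁ {1} > 0`.
For a bounded real harmonic `u`, the function `d = u - S u` is again bounded and harmonic, and
the partial sums of `S^n d` telescope to `u - S^N u`, so they are bounded uniformly in `N`.
Because `μ₁` has an atom of mass `ε` at `1`, a harmonic `f ≤ M` satisfies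
`ε (M - S f) ≤ M - f`. Hence at a point where `d` is within `δ` of `M = sup d`, each `S^n d`
with `n < N` is within `δ / ε^N` of `M`, which forces `N M ≤ 2 sup |u|` for every `N`, so
`M ≤ 0`. Applying this to `±u`, with `u` the real and imaginary parts of `h`, gives `S h = h`. -/

open MeasureTheory Filter ProbabilityTheory
open scoped ENNReal NNReal

noncomputable def mconv {G : Type*} [Mul G] [MeasurableSpace G] (μ ν : Measure G) : Measure G :=
  (μ.prod ν).map (fun p => p.1 * p.2)

noncomputable def mconvPow {G : Type*} [Monoid G] [MeasurableSpace G] (μ : Measure G) : ℕ → Measure G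
  | 0 => Measure.dirac 1
  | n+1 => mconv (mconvPow μ n) μ

noncomputable def tvDist {α : Type*} [MeasurableSpace α] (μ ν : Measure α) : ℝ :=
  ⨆ A : Set α, |(μ A).toReal - (ν A).toReal|

noncomputable def tildeMeasure {G : Type*} [Monoid G] [MeasurableSpace G] (μ : Measure G) : Measure G :=
  Measure.sum (fun n => ((2:ℝ≥0∞)^(n+1))⁻¹ • mconvPow μ n)

instance Prod.instMeasurableMul₂ {M N : Type*} [Mul M] [Mul N] [MeasurableSpace M]
    [MeasurableSpace N] [MeasurableMul₂ M] [MeasurableMul₂ N] : MeasurableMul₂ (M × N) :=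
  ⟨(measurable_fst.fst.mul measurable_snd.fst).prodMk (measurable_fst.snd.mul measurable_snd.snd)⟩

lemma Measurable.integrable_of_abs_le {α : Type*} [MeasurableSpace α] {μ : Measure α}
    [IsFiniteMeasure μ] {f : α → ℝ} (hf : Measurable f) {C : ℝ} (hC : ∀ x, |f x| ≤ C) :
    Integrable f μ :=
  .of_bound hf.aestronglyMeasurable C (.of_forall hC)

lemma MeasureTheory.Measure.measure_singleton_smul_dirac_le {α : Type*} [MeasurableSpace α]
    (μ : Measure α) (x : α) : μ {x} • Measure.dirac x ≤ μ := by
  rw [Measure.le_iff]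
  intro s hs
  rw [Measure.smul_apply, Measure.dirac_apply' x hs, smul_eq_mul]
  by_cases hx : x ∈ s
  · simpa [hx] using measure_mono (Set.singleton_subset_iff.2 hx)
  · simp [hx]

lemma measureReal_singleton_mul_sub_le {α : Type*} [MeasurableSpace α] {μ : Measure α}
    [IsProbabilityMeasure μ] {F : α → ℝ} (hF : StronglyMeasurable F) (hFint : Integrable F μ)
    {M : ℝ} (hM : ∀ a, F a ≤ M) (x : α) :
    μ.real {x} * (M - F x) ≤ M - ∫ a, F a ∂μ := by
  have hint : Integrable (fun a => M - F a) μ := (integrable_const M).sub hFint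
  calc μ.real {x} * (M - F x) = ∫ a, (M - F a) ∂(μ {x} • Measure.dirac x) := by
        rw [integral_smul_measure,
          integral_dirac' (fun a => M - F a) x (stronglyMeasurable_const.sub hF), smul_eq_mul,
          measureReal_def]
    _ ≤ ∫ a, (M - F a) ∂μ :=
        integral_mono_measure (Measure.measure_singleton_smul_dirac_le μ x)
          (.of_forall fun a => sub_nonneg.2 (hM a)) hint
    _ = M - ∫ a, F a ∂μ := by
        rw [integral_sub (integrable_const M) hFint, integral_const]
        simp

section Harmonic

variable {G E F : Type*} [Mul G] [MeasurableSpace G] [NormedAddCommGroup E] [NormedSpace ℝ E]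
  [NormedAddCommGroup F] [NormedSpace ℝ F] {μ : Measure G}

def IsHarmonic (μ : Measure G) (f : G → E) : Prop :=
  ∀ g, f g = ∫ γ, f (g * γ) ∂μ

lemma IsHarmonic.sub {f f' : G → E} (hf : IsHarmonic μ f) (hf' : IsHarmonic μ f')
    (hint : ∀ g, Integrable (fun γ => f (g * γ)) μ)
    (hint' : ∀ g, Integrable (fun γ => f' (g * γ)) μ) : IsHarmonic μ (f - f') := fun g => by
  simp only [Pi.sub_apply, integral_sub (hint g) (hint' g), ← hf g, ← hf' g]

lemma IsHarmonic.neg {f : G → E} (hf : IsHarmonic μ f) : IsHarmonic μ (-f) := fun g => by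
  simp only [Pi.neg_apply, integral_neg, ← hf g]

lemma IsHarmonic.clm_comp [CompleteSpace E] [CompleteSpace F] (L : E →L[ℝ] F) {f : G → E}
    (hf : IsHarmonic μ f) (hint : ∀ g, Integrable (fun γ => f (g * γ)) μ) :
    IsHarmonic μ (fun g => L (f g)) :=
  fun g => by rw [L.integral_comp_comm (hint g), ← hf g]

end Harmonic

/-- The Markov operator of the random walk that stays put in the first coordinate and moves
by `μ₂` in the second one. -/
noncomputable def avgSnd {G₁ G₂ E : Type*} [Mul G₂] [MeasurableSpace G₂] [NormedAddCommGroup E]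
    [NormedSpace ℝ E] (μ₂ : Measure G₂) (f : G₁ × G₂ → E) : G₁ × G₂ → E :=
  fun g => ∫ b, f (g.1, g.2 * b) ∂μ₂

section AvgSnd

variable {G₁ G₂ : Type*} [Mul G₂] [MeasurableSpace G₂] {μ₂ : Measure G₂}
  {f f' : G₁ × G₂ → ℝ} {C C' M : ℝ}

lemma avgSnd_neg (f : G₁ × G₂ → ℝ) : avgSnd μ₂ (-f) = -avgSnd μ₂ f := by
  ext g
  exact integral_neg _

lemma abs_avgSnd_le [IsProbabilityMeasure μ₂] (hC : ∀ g, |f g| ≤ C) (g : G₁ × G₂) :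
    |avgSnd μ₂ f g| ≤ C := by
  simpa [avgSnd] using norm_integral_le_of_norm_le_const (μ := μ₂)
    (f := fun b => f (g.1, g.2 * b)) (.of_forall fun b => hC (g.1, g.2 * b))

lemma abs_iterate_avgSnd_le [IsProbabilityMeasure μ₂] (hC : ∀ g, |f g| ≤ C) (n : ℕ)
    (g : G₁ × G₂) : |(avgSnd μ₂)^[n] f g| ≤ C := by
  induction n generalizing g with
  | zero => exact hC g
  | succ n ih => rw [Function.iterate_succ_apply']; exact abs_avgSnd_le ih g

variable [MeasurableSpace G₁] [MeasurableMul₂ G₂]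

lemma measurable_avgSnd [SFinite μ₂] (hf : Measurable f) : Measurable (avgSnd μ₂ f) :=
  (hf.comp (by fun_prop : Measurable fun p : (G₁ × G₂) × G₂ => (p.1.1, p.1.2 * p.2))
    ).stronglyMeasurable.integral_prod_right'.measurable

lemma measurable_iterate_avgSnd [SFinite μ₂] (hf : Measurable f) (n : ℕ) :
    Measurable ((avgSnd μ₂)^[n] f) := by
  induction n with
  | zero => exact hf
  | succ n ih => rw [Function.iterate_succ_apply']; exact measurable_avgSnd ih

variable [IsProbabilityMeasure μ₂]

lemma integrable_comp_mul_snd (hf : Measurable f) (hC : ∀ g, |f g| ≤ C) (g : G₁ × G₂) :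
    Integrable (fun b => f (g.1, g.2 * b)) μ₂ :=
  (hf.comp (by fun_prop)).integrable_of_abs_le fun _ => hC _

lemma avgSnd_le (hf : Measurable f) (hC : ∀ g, |f g| ≤ C) (hM : ∀ g, f g ≤ M) (g : G₁ × G₂) :
    avgSnd μ₂ f g ≤ M := by
  simpa [avgSnd] using
    integral_mono (μ := μ₂) (integrable_comp_mul_snd hf hC g) (integrable_const M) fun b => hM _

lemma avgSnd_sub (hf : Measurable f) (hC : ∀ g, |f g| ≤ C) (hf' : Measurable f')
    (hC' : ∀ g, |f' g| ≤ C') : avgSnd μ₂ (f - f') = avgSnd μ₂ f - avgSnd μ₂ f' := by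
  ext g
  exact integral_sub (integrable_comp_mul_snd hf hC g) (integrable_comp_mul_snd hf' hC' g)

lemma iterate_avgSnd_sub (hf : Measurable f) (hC : ∀ g, |f g| ≤ C) (hf' : Measurable f')
    (hC' : ∀ g, |f' g| ≤ C') (n : ℕ) :
    (avgSnd μ₂)^[n] (f - f') = (avgSnd μ₂)^[n] f - (avgSnd μ₂)^[n] f' := by
  induction n with
  | zero => rfl
  | succ n ih =>
    simp only [Function.iterate_succ_apply', ih]
    exact avgSnd_sub (measurable_iterate_avgSnd hf n) (abs_iterate_avgSnd_le hC n)
      (measurable_iterate_avgSnd hf' n) (abs_iterate_avgSnd_le hC' n)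

end AvgSnd

lemma nonpos_of_isLUB_of_sum_le {X : Type*} {u : ℕ → X → ℝ} {M ε B : ℝ}
    (hM : IsLUB (Set.range (u 0)) M) (hle : ∀ n x, u n x ≤ M) (hε : 0 < ε) (hε1 : ε ≤ 1)
    (hstep : ∀ n x, ε * (M - u (n + 1) x) ≤ M - u n x)
    (hsum : ∀ N x, ∑ n ∈ Finset.range N, u n x ≤ B) : M ≤ 0 := by
  by_contra! hMpos
  obtain ⟨N, hN⟩ := exists_nat_gt (B / M)
  have hgap : 0 < N * M - B := by rw [div_lt_iff₀ hMpos] at hN; linarith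
  have hεN : 0 < ε ^ N := pow_pos hε N
  obtain ⟨_, ⟨x, rfl⟩, hx, -⟩ := hM.exists_between
    (b := M - ε ^ N * (N * M - B) / (N + 1)) (sub_lt_self _ (by positivity))
  have hgeom : ∀ n, ε ^ n * (M - u n x) ≤ M - u 0 x := by
    intro n
    induction n with
    | zero => simp
    | succ n ih =>
      calc ε ^ (n + 1) * (M - u (n + 1) x) = ε ^ n * (ε * (M - u (n + 1) x)) := by ring
        _ ≤ ε ^ n * (M - u n x) := by gcongr; exact hstep n x
        _ ≤ M - u 0 x := ih
  have hterm : ∀ n ∈ Finset.range N, ε ^ N * (M - u n x) ≤ M - u 0 x := fun n hn =>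
    (mul_le_mul_of_nonneg_right (pow_le_pow_of_le_one hε.le hε1 (Finset.mem_range.1 hn).le)
      (sub_nonneg.2 (hle n x))).trans (hgeom n)
  have htotal : ε ^ N * (N * M - ∑ n ∈ Finset.range N, u n x) ≤ N * (M - u 0 x) := by
    have := Finset.sum_le_sum hterm
    simp only [← Finset.mul_sum, Finset.sum_sub_distrib, Finset.sum_const, Finset.card_range,
      nsmul_eq_mul] at this
    linarith
  have hx' : (N + 1) * (M - u 0 x) < ε ^ N * (N * M - B) := by
    have := (lt_div_iff₀ (by positivity)).1 (sub_lt_comm.1 hx)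
    linarith
  have : ε ^ N * (N * M - ∑ n ∈ Finset.range N, u n x) < ε ^ N * (N * M - B) := by
    nlinarith [hle 0 x]
  linarith [hsum N x, lt_of_mul_lt_mul_left this hεN.le]

section Product

variable {G₁ G₂ : Type*} [Monoid G₁] [Monoid G₂] [MeasurableSpace G₁] [MeasurableSpace G₂]
  [MeasurableMul₂ G₁] [MeasurableMul₂ G₂] {μ₁ : Measure G₁} {μ₂ : Measure G₂}
  [IsProbabilityMeasure μ₁] [IsProbabilityMeasure μ₂] {f : G₁ × G₂ → ℝ} {C M : ℝ}

lemma integrable_comp_mul (hf : Measurable f) (hC : ∀ g, |f g| ≤ C) (g : G₁ × G₂) :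
    Integrable (fun γ => f (g * γ)) (μ₁.prod μ₂) :=
  (hf.comp (measurable_const_mul g)).integrable_of_abs_le fun _ => hC _

/-- `avgSnd μ₂` commutes with the Markov operator of `μ₁ × μ₂`: both composites average
`f (g₁ a, g₂ b c)` over independent `a ∼ μ₁`, `b, c ∼ μ₂`. -/
lemma isHarmonic_avgSnd (hf : IsHarmonic (μ₁.prod μ₂) f) (hmeas : Measurable f)
    (hC : ∀ g, |f g| ≤ C) : IsHarmonic (μ₁.prod μ₂) (avgSnd μ₂ f) := by
  intro g
  have hswap : Integrable (Function.uncurry fun (b : G₂) (a : G₁) =>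
      avgSnd μ₂ f (g.1 * a, g.2 * b)) (μ₂.prod μ₁) :=
    ((measurable_avgSnd (μ₂ := μ₂) hmeas).comp (by fun_prop)).integrable_of_abs_le
      fun _ => abs_avgSnd_le hC _
  calc avgSnd μ₂ f g = ∫ b, ∫ a, avgSnd μ₂ f (g.1 * a, g.2 * b) ∂μ₁ ∂μ₂ := by
        refine integral_congr_ae (.of_forall fun b => ?_)
        dsimp only
        rw [hf (g.1, g.2 * b), integral_prod _ (integrable_comp_mul hmeas hC _)]
        simp only [avgSnd, Prod.mk_mul_mk, mul_assoc]
    _ = ∫ a, ∫ b, avgSnd μ₂ f (g.1 * a, g.2 * b) ∂μ₂ ∂μ₁ := integral_integral_swap hswap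
    _ = ∫ γ, avgSnd μ₂ f (g * γ) ∂(μ₁.prod μ₂) :=
        (integral_prod _ (integrable_comp_mul (measurable_avgSnd hmeas) (abs_avgSnd_le hC) g)).symm

lemma isHarmonic_iterate_avgSnd (hf : IsHarmonic (μ₁.prod μ₂) f) (hmeas : Measurable f)
    (hC : ∀ g, |f g| ≤ C) (n : ℕ) : IsHarmonic (μ₁.prod μ₂) ((avgSnd μ₂)^[n] f) := by
  induction n with
  | zero => exact hf
  | succ n ih =>
    rw [Function.iterate_succ_apply']
    exact isHarmonic_avgSnd ih (measurable_iterate_avgSnd hmeas n) (abs_iterate_avgSnd_le hC n)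

/-- The first step of the walk stays at `1 ∈ G₁` with probability `μ₁ {1}`, and from there it
moves by `avgSnd μ₂`. -/
lemma IsHarmonic.mul_sub_avgSnd_le (hf : IsHarmonic (μ₁.prod μ₂) f) (hmeas : Measurable f)
    (hC : ∀ g, |f g| ≤ C) (hM : ∀ g, f g ≤ M) (g : G₁ × G₂) :
    μ₁.real {1} * (M - avgSnd μ₂ f g) ≤ M - f g := by
  have hF : Measurable fun a => avgSnd μ₂ f (g.1 * a, g.2) :=
    (measurable_avgSnd hmeas).comp (by fun_prop)
  have hfg : f g = ∫ a, avgSnd μ₂ f (g.1 * a, g.2) ∂μ₁ := by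
    rw [hf g, integral_prod _ (integrable_comp_mul hmeas hC g)]
    rfl
  simpa [← hfg] using measureReal_singleton_mul_sub_le hF.stronglyMeasurable
    (hF.integrable_of_abs_le (μ := μ₁) fun _ => abs_avgSnd_le hC _)
    (fun _ => avgSnd_le hmeas hC hM _) 1

lemma IsHarmonic.nonpos_of_sum_iterate_avgSnd_le (he : 0 < μ₁ {1})
    (hf : IsHarmonic (μ₁.prod μ₂) f) (hmeas : Measurable f) (hC : ∀ g, |f g| ≤ C) {B : ℝ}
    (hsum : ∀ N g, ∑ n ∈ Finset.range N, (avgSnd μ₂)^[n] f g ≤ B) (g : G₁ × G₂) : f g ≤ 0 := by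
  have hM : IsLUB (Set.range f) (⨆ g, f g) :=
    isLUB_ciSup ⟨C, Set.forall_mem_range.2 fun g => (abs_le.1 (hC g)).2⟩
  have hle : ∀ n g, (avgSnd μ₂)^[n] f g ≤ ⨆ g, f g := by
    intro n
    induction n with
    | zero => exact fun g => hM.1 ⟨g, rfl⟩
    | succ n ih =>
      intro g
      rw [Function.iterate_succ_apply']
      exact avgSnd_le (measurable_iterate_avgSnd hmeas n) (abs_iterate_avgSnd_le hC n) ih g
  have hstep : ∀ n g, μ₁.real {1} * ((⨆ g, f g) - (avgSnd μ₂)^[n + 1] f g)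
      ≤ (⨆ g, f g) - (avgSnd μ₂)^[n] f g := fun n g => by
    rw [Function.iterate_succ_apply']
    exact (isHarmonic_iterate_avgSnd hf hmeas hC n).mul_sub_avgSnd_le
      (measurable_iterate_avgSnd hmeas n) (abs_iterate_avgSnd_le hC n) (hle n) g
  exact (hM.1 ⟨g, rfl⟩).trans <| nonpos_of_isLUB_of_sum_le hM hle
    (ENNReal.toReal_pos he.ne' (measure_ne_top _ _)) measureReal_le_one hstep hsum

/-- The partial sums of `(avgSnd μ₂)^[n] (f - avgSnd μ₂ f)` telescope, hence stay bounded. -/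
lemma IsHarmonic.le_avgSnd (he : 0 < μ₁ {1}) (hf : IsHarmonic (μ₁.prod μ₂) f)
    (hmeas : Measurable f) (hC : ∀ g, |f g| ≤ C) (g : G₁ × G₂) : f g ≤ avgSnd μ₂ f g := by
  have hS := measurable_avgSnd (μ₂ := μ₂) hmeas
  have hSC := abs_avgSnd_le (μ₂ := μ₂) hC
  have hsum : ∀ N g, ∑ n ∈ Finset.range N, (avgSnd μ₂)^[n] (f - avgSnd μ₂ f) g ≤ C + C := by
    intro N g
    simp only [iterate_avgSnd_sub hmeas hC hS hSC, Pi.sub_apply,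
      ← Function.iterate_succ_apply, Finset.sum_range_sub', Function.iterate_zero, id_eq]
    linarith [abs_le.1 (hC g), abs_le.1 (abs_iterate_avgSnd_le (μ₂ := μ₂) hC N g)]
  have := (hf.sub (isHarmonic_avgSnd hf hmeas hC) (integrable_comp_mul hmeas hC)
    (integrable_comp_mul hS hSC)).nonpos_of_sum_iterate_avgSnd_le he (hmeas.sub hS)
    (fun g => (abs_sub _ _).trans (add_le_add (hC g) (hSC g))) hsum g
  simpa [sub_nonpos] using this

lemma IsHarmonic.avgSnd_eq (he : 0 < μ₁ {1}) (hf : IsHarmonic (μ₁.prod μ₂) f)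
    (hmeas : Measurable f) (hC : ∀ g, |f g| ≤ C) : avgSnd μ₂ f = f := by
  ext g
  have hneg := hf.neg.le_avgSnd he hmeas.neg (by simpa using hC) g
  rw [avgSnd_neg] at hneg
  exact le_antisymm (by simpa using hneg) (hf.le_avgSnd he hmeas hC g)

end Product

/-- if `μ₁({e}) > 0`, a bounded `(μ₁ × μ₂)`-harmonic function on `G₁ × G₂`
restricts, in each first coordinate, to a `μ₂`-harmonic function on `G₂`. -/
theorem stmt10 {G₁ G₂ : Type*} [Group G₁] [Group G₂]
    [MeasurableSpace G₁] [MeasurableSpace G₂]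
    [MeasurableMul₂ G₁] [MeasurableMul₂ G₂]
    (μ₁ : Measure G₁) (μ₂ : Measure G₂)
    [IsProbabilityMeasure μ₁] [IsProbabilityMeasure μ₂]
    (he : 0 < μ₁ {(1 : G₁)})
    (h : G₁ × G₂ → ℂ) (hmeas : Measurable h) (hbdd : ∃ C, ∀ g, ‖h g‖ ≤ C)
    (hharm : ∀ g : G₁ × G₂, h g = ∫ γ, h (g * γ) ∂(μ₁.prod μ₂)) :
    ∀ (g₁ : G₁) (γ : G₂), h (g₁, γ) = ∫ b, h (g₁, γ * b) ∂μ₂ := by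
  obtain ⟨C, hC⟩ := hbdd
  have hint : ∀ g, Integrable (fun γ => h (g * γ)) (μ₁.prod μ₂) := fun g =>
    .of_bound (hmeas.comp (measurable_const_mul g)).aestronglyMeasurable C
      (.of_forall fun _ => hC _)
  have hre := (IsHarmonic.clm_comp Complex.reCLM hharm hint).avgSnd_eq he (by fun_prop)
    fun g => (Complex.abs_re_le_norm _).trans (hC g)
  have him := (IsHarmonic.clm_comp Complex.imCLM hharm hint).avgSnd_eq he (by fun_prop)
    fun g => (Complex.abs_im_le_norm _).trans (hC g)
  intro g₁ γ
  have hint₂ : Integrable (fun b => h (g₁, γ * b)) μ₂ :=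
    .of_bound (hmeas.comp (by fun_prop)).aestronglyMeasurable C (.of_forall fun _ => hC _)
  apply Complex.ext
  · exact (congrFun hre (g₁, γ)).symm.trans (Complex.reCLM.integral_comp_comm hint₂)
  · exact (congrFun him (g₁, γ)).symm.trans (Complex.imCLM.integral_comp_comm hint₂)
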